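/- If J_p ≠ {0} for some p ∈ {1,2,4}, then B = A, i.e. the derived subalgebra of the Lie algebra (A, [·,·]) is all of A. -/

import Mathlib

namespace SuBlock

variable (F : Type*) [Field F]

def sigmaV : Fin 4 → F := ![1, 0, 1, 0]

def deltaV (d : F) : Fin 4 → F := ![0, 0, d, 0]

/-- The data `(Γ, J, δ)` of the paper: `δ₃ ∈ F \ {0}`, `Γ ≤ F⁴` an additive subgroup
containing `σ = (1,0,1,0)` and `δ = (0,0,δ₃,0)`, with `ker π₄ ⊄ ker π₂` whenever `π₂ ≠ 0`,
and `J_p` encoded by `m p : Bool` (`J_p = ℕ` iff `m p = true`), with `J_q ≠ {0}`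
whenever `π_q = 0`, for `q = 2,4`.  (Coordinates `1,2,3,4` are `Fin 4` indices `0,1,2,3`.) -/
structure Datum where
  d3 : F
  d3_ne : d3 ≠ 0
  Γ : AddSubgroup (Fin 4 → F)
  m : Fin 4 → Bool
  sigma_mem : sigmaV F ∈ Γ
  delta_mem : deltaV F d3 ∈ Γ
  ker_cond : (∃ α ∈ Γ, α 1 ≠ 0) → ∃ α ∈ Γ, α 3 = 0 ∧ α 1 ≠ 0
  J2_cond : (∀ α ∈ Γ, α 1 = 0) → m 1 = true
  J4_cond : (∀ α ∈ Γ, α 3 = 0) → m 3 = true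

variable {F}

/-- The monoid `J = J₁ × J₂ × J₃ × J₄ ⊆ ℕ⁴`, where `J_p = ℕ` if `m p = true` and
`J_p = {0}` otherwise. -/
def Jmon (m : Fin 4 → Bool) : AddSubmonoid (Fin 4 → ℕ) where
  carrier := {i | ∀ p, m p = false → i p = 0}
  zero_mem' := fun p _ => rfl
  add_mem' := fun ha hb p hp => by
    simp only [Set.mem_setOf_eq] at ha hb
    simp [Pi.add_apply, ha p hp, hb p hp]

/-- The commutative associative algebra `A = A(Γ,J)`, the semigroup algebra of `Γ × J`
with basis `x^{α,i}`, `(α,i) ∈ Γ × J`. -/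
abbrev Alg (D : Datum F) : Type _ := AddMonoidAlgebra F (↥D.Γ × ↥(Jmon D.m))

/-- The basis element `x^{α,i}`. -/
noncomputable def X (D : Datum F) (g : ↥D.Γ × ↥(Jmon D.m)) : Alg D :=
  AddMonoidAlgebra.single g 1

/-- `i - 1_[p]` (truncated subtraction). -/
def subE {m : Fin 4 → Bool} (i : ↥(Jmon m)) (p : Fin 4) : ↥(Jmon m) :=
  ⟨i.1 - Pi.single p 1, fun q hq => by
    have h : i.1 q = 0 := i.2 q hq
    simp only [Pi.sub_apply, h, Nat.zero_sub]⟩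

/-- `∂_p x^{α,i} = α_p x^{α,i} + i_p x^{α,i-1_[p]}` (coordinates are `Fin 4` indexed). -/
noncomputable def Dmon (D : Datum F) (p : Fin 4) (g : ↥D.Γ × ↥(Jmon D.m)) : Alg D :=
  (g.1.1 p) • X D g + ((g.2.1 p : F)) • X D (g.1, subE g.2 p)

/-- The derivation `∂_p` of `A`, extended linearly from its values on the basis. -/
noncomputable def Dop (D : Datum F) (p : Fin 4) (u : Alg D) : Alg D :=
  Finsupp.sum u.coeff fun g c => c • Dmon D p g

/-- The Lie bracket (1.6):
`[u,v] = x^{σ,0}(∂₁(u)∂₂(v) − ∂₁(v)∂₂(u)) + (x^{δ,0}∂₃(u) + u)∂₄(v) − ∂₄(u)(x^{δ,0}∂₃(v) + v)`. -/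
noncomputable def br (D : Datum F) (u v : Alg D) : Alg D :=
  X D (⟨sigmaV F, D.sigma_mem⟩, 0) * (Dop D 0 u * Dop D 1 v - Dop D 0 v * Dop D 1 u)
    + (X D (⟨deltaV F D.d3, D.delta_mem⟩, 0) * Dop D 2 u + u) * Dop D 3 v
    - Dop D 3 u * (X D (⟨deltaV F D.d3, D.delta_mem⟩, 0) * Dop D 2 v + v)

/-- The derived subalgebra `B = [A,A]`, the span of all brackets. -/
noncomputable def Bspan (D : Datum F) : Submodule F (Alg D) :=
  Submodule.span F {w | ∃ u v : Alg D, w = br D u v}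

/-! Every monomial `x^{α,i}` lies in `B`. Since `[1, x^{α,i}] = ∂₄ x^{α,i}` and `∂₄` is triangular
in `i₄` with diagonal `α₄`, this settles `α₄ ≠ 0`, and `J₄ = ℕ` via `∂₄ x^{α,i+1_[4]}`.
Otherwise `∂₄` kills all monomials with `α₄ = 0`, the bracket of two of them is
`x^σ (∂₁u ∂₂v − ∂₁v ∂₂u)`, and the Leibniz rule gives `[x^{α-2σ,i}, x^{σ,0}] = −∂₂ x^{α,i}`,
`[x^{α-σ,i}, x^{0,1_[2]}] − [x^{α-2σ,i}, x^{σ,1_[2]}] = ∂₂ x^{α,i+1_[2]}`, and, when `α₂ = i₂ = 0`,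
`[x^{α-t-σ,i}, x^{t,0}] = t₂ (∂₁ − 1) x^{α,i}` for any `t ∈ Γ` with `t₄ = 0`. The same
triangularity of `∂₂` and of `∂₁ − 1` covers `α₂ ≠ 0`, then `J₂ = ℕ`, and finally `J₁ = ℕ`, where
`J₂ = {0}` forces `π₂ ≠ 0` and `ker π₄ ⊄ ker π₂` provides `t` with `t₂ ≠ 0`. -/

section Monomials

variable (D : Datum F)

def sigmaIdx : D.Γ × Jmon D.m := (⟨sigmaV F, D.sigma_mem⟩, 0)

def unitJ (p : Fin 4) (hp : D.m p = true) : Jmon D.m :=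
  ⟨Pi.single p 1, fun q hq => Pi.single_eq_of_ne (by rintro rfl; simp [hp] at hq) 1⟩

variable {D}

@[simp] lemma sigmaV_zero : sigmaV F 0 = 1 := rfl
@[simp] lemma sigmaV_one : sigmaV F 1 = 0 := rfl
@[simp] lemma sigmaV_three : sigmaV F 3 = 0 := rfl

@[simp] lemma coe_unitJ (p : Fin 4) (hp : D.m p = true) :
    ((unitJ D p hp : Jmon D.m) : Fin 4 → ℕ) = Pi.single p 1 := rfl

@[simp] lemma coe_subE {m : Fin 4 → Bool} (k : Jmon m) (p : Fin 4) :
    ((subE k p : Jmon m) : Fin 4 → ℕ) = (k : Fin 4 → ℕ) - Pi.single p 1 := rfl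

lemma subE_add_unitJ (k : Jmon D.m) (p : Fin 4) (hp : D.m p = true) :
    subE (k + unitJ D p hp) p = k := by
  ext q
  simp only [coe_subE, AddSubmonoid.coe_add, coe_unitJ, Pi.sub_apply, Pi.add_apply]
  omega

lemma subE_unitJ (p : Fin 4) (hp : D.m p = true) : subE (unitJ D p hp) p = 0 := by
  simpa using subE_add_unitJ 0 p hp

lemma subE_add_of_ne_zero {m : Fin 4 → Bool} (k l : Jmon m) {p : Fin 4}
    (h : (k : Fin 4 → ℕ) p ≠ 0) : subE (k + l) p = subE k p + l := by
  ext q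
  simp only [coe_subE, AddSubmonoid.coe_add, Pi.sub_apply, Pi.add_apply]
  rcases eq_or_ne q p with rfl | hq
  · simp only [Pi.single_eq_same]; omega
  · simp [Pi.single_eq_of_ne hq]

lemma X_mul_X (a b : D.Γ × Jmon D.m) : X D a * X D b = X D (a + b) := by
  simp [X, AddMonoidAlgebra.single_mul_single]

lemma X_zero : X D 0 = 1 := rfl

lemma Dop_X (p : Fin 4) (a : D.Γ × Jmon D.m) : Dop D p (X D a) = Dmon D p a := by
  rw [Dop, X, AddMonoidAlgebra.coeff_single, Finsupp.sum_single_index (by rw [zero_smul]), one_smul]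

lemma Dmon_of_coe_eq_zero {p : Fin 4} {a : D.Γ × Jmon D.m} (h : (a.2 : Fin 4 → ℕ) p = 0) :
    Dmon D p a = (a.1 : Fin 4 → F) p • X D a := by
  simp [Dmon, h]

lemma Dmon_sub_smul_X (p : Fin 4) (g : D.Γ) (k : Jmon D.m) (c : F) :
    Dmon D p (g, k) - c • X D (g, k)
      = ((g : Fin 4 → F) p - c) • X D (g, k) + ((k : Fin 4 → ℕ) p : F) • X D (g, subE k p) := by
  rw [Dmon]; module

lemma natCast_smul_X_subE_add (p : Fin 4) (g : D.Γ) (k l : Jmon D.m) :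
    ((k : Fin 4 → ℕ) p : F) • X D (g, subE (k + l) p)
      = ((k : Fin 4 → ℕ) p : F) • X D (g, subE k p + l) := by
  by_cases h : (k : Fin 4 → ℕ) p = 0
  · simp [h]
  · rw [subE_add_of_ne_zero k l h]

lemma Dmon_add (p : Fin 4) (a b : D.Γ × Jmon D.m) :
    Dmon D p (a + b) = Dmon D p a * X D b + X D a * Dmon D p b := by
  obtain ⟨g, k⟩ := a
  obtain ⟨h, l⟩ := b
  simp only [Dmon, Prod.mk_add_mk, add_mul, mul_add, smul_mul_assoc, mul_smul_comm, X_mul_X,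
    AddSubgroup.coe_add, AddSubmonoid.coe_add, Pi.add_apply, Nat.cast_add, add_smul]
  rw [natCast_smul_X_subE_add, add_comm k l, natCast_smul_X_subE_add, add_comm (subE l p) k]
  module

lemma sigmaIdx_add_sigmaIdx_add (g : D.Γ) (k : Jmon D.m) :
    sigmaIdx D + (sigmaIdx D + (g - (sigmaIdx D).1 - (sigmaIdx D).1, k)) = (g, k) :=
  Prod.ext (by simp only [Prod.fst_add]; abel) (by simp [sigmaIdx])

end Monomials

section Brackets

variable {D : Datum F}

lemma br_mem (u v : Alg D) : br D u v ∈ Bspan D :=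
  Submodule.subset_span ⟨u, v, rfl⟩

lemma Dmon_sigmaIdx (p : Fin 4) : Dmon D p (sigmaIdx D) = sigmaV F p • X D (sigmaIdx D) :=
  Dmon_of_coe_eq_zero rfl

lemma Dmon_three_eq_zero (hm : D.m 3 = false) {g : D.Γ} (hg : (g : Fin 4 → F) 3 = 0)
    (k : Jmon D.m) : Dmon D 3 (g, k) = 0 := by
  rw [Dmon_of_coe_eq_zero (k.2 3 hm), hg, zero_smul]

lemma br_X_zero_X (b : D.Γ × Jmon D.m) : br D (X D 0) (X D b) = Dmon D 3 b := by
  have h0 : ∀ p, Dmon D p 0 = 0 := fun p => by simp [Dmon]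
  rw [br]
  simp only [Dop_X, h0]
  rw [X_zero]
  ring

lemma br_X_X_of_Dmon_three_eq_zero {a b : D.Γ × Jmon D.m} (ha : Dmon D 3 a = 0)
    (hb : Dmon D 3 b = 0) :
    br D (X D a) (X D b)
      = X D (sigmaIdx D) * (Dmon D 0 a * Dmon D 1 b - Dmon D 0 b * Dmon D 1 a) := by
  simp only [br, Dop_X, ha, hb, mul_zero, zero_mul, add_zero, sub_zero]
  rfl

lemma br_X_X_sigmaIdx {a : D.Γ × Jmon D.m} (ha : Dmon D 3 a = 0) :
    br D (X D a) (X D (sigmaIdx D)) = -Dmon D 1 (sigmaIdx D + (sigmaIdx D + a)) := by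
  rw [br_X_X_of_Dmon_three_eq_zero ha (by simp [Dmon_sigmaIdx])]
  simp only [Dmon_add, Dmon_sigmaIdx, sigmaV_zero, sigmaV_one, zero_smul, one_smul, ← X_mul_X]
  ring

lemma br_sub_br_unitJ {a : D.Γ × Jmon D.m} (ha : Dmon D 3 a = 0) (hm : D.m 1 = true) :
    br D (X D (sigmaIdx D + a)) (X D (0, unitJ D 1 hm))
      - br D (X D a) (X D (sigmaIdx D + (0, unitJ D 1 hm)))
      = Dmon D 1 (sigmaIdx D + (sigmaIdx D + a) + (0, unitJ D 1 hm)) := by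
  set e : D.Γ × Jmon D.m := (0, unitJ D 1 hm)
  have he0 : Dmon D 0 e = 0 := by simp [e, Dmon]
  have he1 : Dmon D 1 e = 1 := by
    simp [e, Dmon, subE_unitJ, ← Prod.zero_eq_mk, X_zero]
  have he3 : Dmon D 3 e = 0 := by simp [e, Dmon]
  have hσ3 : Dmon D 3 (sigmaIdx D) = 0 := by simp [Dmon_sigmaIdx]
  rw [br_X_X_of_Dmon_three_eq_zero (by simp [Dmon_add, ha, hσ3]) he3,
    br_X_X_of_Dmon_three_eq_zero ha (by simp [Dmon_add, he3, hσ3])]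
  simp only [Dmon_add, Dmon_sigmaIdx, he0, he1, sigmaV_zero, sigmaV_one, zero_smul, one_smul,
    ← X_mul_X]
  ring

lemma br_X_X_of_Dmon_one_eq {a : D.Γ × Jmon D.m} {t : D.Γ} (ha : Dmon D 3 a = 0)
    (ht : (t : Fin 4 → F) 3 = 0) (ha₁ : Dmon D 1 a = -((t : Fin 4 → F) 1 • X D a)) :
    br D (X D a) (X D (t, 0)) = (t : Fin 4 → F) 1 •
      (Dmon D 0 (sigmaIdx D + ((t, 0) + a)) - X D (sigmaIdx D + ((t, 0) + a))) := by
  have ht' : ∀ p, Dmon D p (t, 0) = (t : Fin 4 → F) p • X D (t, 0) :=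
    fun p => Dmon_of_coe_eq_zero rfl
  rw [br_X_X_of_Dmon_three_eq_zero ha (by rw [ht', ht, zero_smul])]
  simp only [Dmon_add, Dmon_sigmaIdx, ht', ha₁, sigmaV_zero, one_smul, ← X_mul_X]
  simp only [Algebra.smul_def]
  ring

end Brackets

section Membership

variable [CharZero F] {D : Datum F}

lemma X_mem_of_Dmon_add_unitJ_sub_smul_mem {p : Fin 4} (hp : D.m p = true) {g : D.Γ} {c : F}
    (hgc : (g : Fin 4 → F) p = c) (k : Jmon D.m)
    (h : Dmon D p (g, k + unitJ D p hp) - c • X D (g, k + unitJ D p hp) ∈ Bspan D) :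
    X D (g, k) ∈ Bspan D := by
  rw [Dmon_sub_smul_X, hgc, sub_self, zero_smul, zero_add, subE_add_unitJ] at h
  refine (Submodule.smul_mem_iff _ ?_).1 h
  simp only [AddSubmonoid.coe_add, coe_unitJ, Pi.add_apply, Pi.single_eq_same]
  exact Nat.cast_ne_zero.2 (Nat.succ_ne_zero _)

lemma X_mem_of_forall_Dmon_sub_smul_mem {p : Fin 4} {g : D.Γ} {c : F}
    (hgc : (g : Fin 4 → F) p ≠ c ∨ D.m p = true)
    (h : ∀ k, Dmon D p (g, k) - c • X D (g, k) ∈ Bspan D) (k : Jmon D.m) :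
    X D (g, k) ∈ Bspan D := by
  by_cases hc : (g : Fin 4 → F) p = c
  · exact X_mem_of_Dmon_add_unitJ_sub_smul_mem (hgc.resolve_left (not_not.2 hc)) hc k (h _)
  have hstep : ∀ k : Jmon D.m, ((k : Fin 4 → ℕ) p : F) • X D (g, subE k p) ∈ Bspan D →
      X D (g, k) ∈ Bspan D := fun k hlow => by
    have hk := h k
    rw [Dmon_sub_smul_X, Submodule.add_mem_iff_left _ hlow] at hk
    exact (Submodule.smul_mem_iff _ (sub_ne_zero.2 hc)).1 hk
  obtain ⟨n, hn⟩ : ∃ n, (k : Fin 4 → ℕ) p = n := ⟨_, rfl⟩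
  induction n generalizing k with
  | zero => exact hstep k (by simp [hn])
  | succ n ih => exact hstep k (Submodule.smul_mem _ _ (ih _ (by simp [hn])))

lemma X_mem_of_coord_three_ne_zero_or_m_three (g : D.Γ) (hg : (g : Fin 4 → F) 3 ≠ 0 ∨ D.m 3 = true)
    (k : Jmon D.m) : X D (g, k) ∈ Bspan D :=
  X_mem_of_forall_Dmon_sub_smul_mem (c := 0) hg (fun k => by
    rw [zero_smul, sub_zero, ← br_X_zero_X]
    exact br_mem _ _) k

section CoordThreeZero

variable (hm₃ : D.m 3 = false) {g : D.Γ} (hg₃ : (g : Fin 4 → F) 3 = 0)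
include hm₃ hg₃

lemma X_mem_of_coord_one_ne_zero (hg₁ : (g : Fin 4 → F) 1 ≠ 0) (k : Jmon D.m) :
    X D (g, k) ∈ Bspan D := by
  refine X_mem_of_forall_Dmon_sub_smul_mem (c := 0) (Or.inl hg₁) (fun k => ?_) k
  have h := br_mem (X D (g - (sigmaIdx D).1 - (sigmaIdx D).1, k)) (X D (sigmaIdx D))
  rw [br_X_X_sigmaIdx (Dmon_three_eq_zero hm₃ (by simp [sigmaIdx, hg₃]) k), neg_mem_iff] at h
  simpa only [zero_smul, sub_zero, sigmaIdx_add_sigmaIdx_add] using h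

lemma X_mem_of_coord_one_eq_zero_of_m_one (hg₁ : (g : Fin 4 → F) 1 = 0) (hm₁ : D.m 1 = true)
    (k : Jmon D.m) : X D (g, k) ∈ Bspan D := by
  refine X_mem_of_Dmon_add_unitJ_sub_smul_mem (c := 0) hm₁ hg₁ k ?_
  rw [zero_smul, sub_zero]
  set s := sigmaIdx D
  set e : D.Γ × Jmon D.m := (0, unitJ D 1 hm₁)
  set a : D.Γ × Jmon D.m := (g - s.1 - s.1, k)
  have h := sub_mem (br_mem (X D (s + a)) (X D e)) (br_mem (X D a) (X D (s + e)))
  rw [br_sub_br_unitJ (Dmon_three_eq_zero hm₃ (by simp [s, sigmaIdx, hg₃]) k) hm₁] at h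
  rwa [sigmaIdx_add_sigmaIdx_add, Prod.mk_add_mk, add_zero] at h

lemma X_mem_of_coord_one_eq_zero_of_m_zero (hg₁ : (g : Fin 4 → F) 1 = 0) (hm₀ : D.m 0 = true)
    (hm₁ : D.m 1 = false) {t : D.Γ} (ht₃ : (t : Fin 4 → F) 3 = 0)
    (ht₁ : (t : Fin 4 → F) 1 ≠ 0) (k : Jmon D.m) : X D (g, k) ∈ Bspan D := by
  refine X_mem_of_forall_Dmon_sub_smul_mem (c := 1) (Or.inr hm₀) (fun k => ?_) k
  rw [one_smul]
  have h := br_mem (X D (g - t - (sigmaIdx D).1, k)) (X D (t, 0))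
  have ha₁ : Dmon D 1 (g - t - (sigmaIdx D).1, k)
      = -((t : Fin 4 → F) 1 • X D (g - t - (sigmaIdx D).1, k)) := by
    rw [Dmon_of_coe_eq_zero (k.2 1 hm₁)]
    simp [sigmaIdx, hg₁]
  rw [br_X_X_of_Dmon_one_eq (Dmon_three_eq_zero hm₃ (by simp [sigmaIdx, hg₃, ht₃]) k) ht₃ ha₁,
    Submodule.smul_mem_iff _ ht₁] at h
  rwa [show sigmaIdx D + ((t, 0) + (g - t - (sigmaIdx D).1, k)) = (g, k) from
    Prod.ext (by simp only [Prod.fst_add]; abel) (by simp [sigmaIdx])] at h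

end CoordThreeZero

lemma X_mem (h : D.m 0 = true ∨ D.m 1 = true ∨ D.m 3 = true) (a : D.Γ × Jmon D.m) :
    X D a ∈ Bspan D := by
  obtain ⟨g, k⟩ := a
  by_cases h₃ : (g : Fin 4 → F) 3 ≠ 0 ∨ D.m 3 = true
  · exact X_mem_of_coord_three_ne_zero_or_m_three g h₃ k
  simp only [not_or, not_not, Bool.not_eq_true] at h₃
  obtain ⟨hg₃, hm₃⟩ := h₃
  rcases ne_or_eq ((g : Fin 4 → F) 1) 0 with hg₁ | hg₁
  · exact X_mem_of_coord_one_ne_zero hm₃ hg₃ hg₁ k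
  cases hm₁ : D.m 1
  · have hm₀ : D.m 0 = true := by simpa [hm₁, hm₃] using h
    obtain ⟨t, ht, ht₃, ht₁⟩ := D.ker_cond (by
      by_contra! hΓ
      simp [D.J2_cond hΓ] at hm₁)
    exact X_mem_of_coord_one_eq_zero_of_m_zero hm₃ hg₃ hg₁ hm₀ hm₁ (t := ⟨t, ht⟩) ht₃ ht₁ k
  · exact X_mem_of_coord_one_eq_zero_of_m_one hm₃ hg₃ hg₁ hm₁ k

end Membership

/-- if `J_p ≠ {0}` for some `p ∈ {1,2,4}`, then `B = A`. -/
theorem derived_subalgebra_eq_top (F : Type*) [Field F] [CharZero F] (D : Datum F)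
    (h : D.m 0 = true ∨ D.m 1 = true ∨ D.m 3 = true) :
    Bspan D = ⊤ := by
  rw [eq_top_iff, ← (AddMonoidAlgebra.basis _ F).span_eq, Submodule.span_le]
  rintro _ ⟨a, rfl⟩
  exact X_mem h a

end SuBlock
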